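/- arXiv:2406.13998 — 3 statements merged into one kernel-verified Lean document; each statement's English description precedes it below -/
import Mathlib

section
/- Let C be a set of colors, and let G = {G_i[Y,B] : i ∈ C} be a collection of bipartite graphs with common bipartition (Y, B) such that 7|Y| < |B| ≤ (3/5)|C|. If the total number of edges satisfies Σ_{i ∈ C} |E(G_i[Y,B])| ≥ t·|B|·|C| for some integer t with 1 ≤ t ≤ |Y|, then there exist t pairwise vertex-disjoint rainbow stars S_5, each with its center in Y and its four leaves in B, using 4t pairwise distinct colors in total. -/
open SimpleGraph

open Finset

lemma aux_matching {α β : Type*} [DecidableEq α] [DecidableEq β] (bβ bγ : ℕ) :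
    ∀ (n : ℕ) (S : Finset (α × β)),
      (∀ a : α, (S.filter fun p => p.1 = a).card ≤ bβ) →
      (∀ b : β, (S.filter fun p => p.2 = b).card ≤ bγ) →
      n * (bβ + bγ) < S.card →
      ∃ f : Fin (n + 1) → α × β, (∀ j, f j ∈ S) ∧
        Function.Injective (fun j => (f j).1) ∧
        Function.Injective (fun j => (f j).2) := by
  intro n
  induction n with
  | zero =>
      intro S h1 h2 hS
      obtain ⟨e, he⟩ := Finset.card_pos.mp (by simpa using hS)
      exact ⟨fun _ => e, fun _ => he,
        fun a b _ => Fin.ext (by omega), fun a b _ => Fin.ext (by omega)⟩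
  | succ n ih =>
      intro S h1 h2 hS
      obtain ⟨e, he⟩ := Finset.card_pos.mp (show 0 < S.card by
        have : 0 ≤ (n+1) * (bβ + bγ) := Nat.zero_le _
        omega)
      set S' := S.filter (fun p => ¬ p.1 = e.1 ∧ ¬ p.2 = e.2) with hS'def
      have hsub : S' ⊆ S := Finset.filter_subset _ _
      have hcard : S.card ≤ S'.card + (bβ + bγ) := by
        have hcover : S ⊆ S' ∪ (S.filter fun p => p.1 = e.1) ∪ (S.filter fun p => p.2 = e.2) := by
          intro p hp
          by_cases ha : p.1 = e.1
          · exact mem_union_left _ (mem_union_right _ (mem_filter.mpr ⟨hp, ha⟩))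
          by_cases hb : p.2 = e.2
          · exact mem_union_right _ (mem_filter.mpr ⟨hp, hb⟩)
          · exact mem_union_left _ (mem_union_left _ (mem_filter.mpr ⟨hp, ha, hb⟩))
        calc S.card ≤ (S' ∪ (S.filter fun p => p.1 = e.1) ∪ (S.filter fun p => p.2 = e.2)).card :=
              Finset.card_le_card hcover
          _ ≤ (S' ∪ (S.filter fun p => p.1 = e.1)).card + (S.filter fun p => p.2 = e.2).card :=
              Finset.card_union_le _ _
          _ ≤ S'.card + (S.filter fun p => p.1 = e.1).card + (S.filter fun p => p.2 = e.2).card :=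
              Nat.add_le_add_right (Finset.card_union_le _ _) _
          _ ≤ S'.card + (bβ + bγ) := by
              have := h1 e.1; have := h2 e.2; omega
      have hlt : n * (bβ + bγ) < S'.card := by
        have h' : (n+1) * (bβ + bγ) = n * (bβ + bγ) + (bβ + bγ) := by ring
        omega
      obtain ⟨g, hgS, hg1, hg2⟩ := ih S'
        (fun a => le_trans (card_le_card (filter_subset_filter _ hsub)) (h1 a))
        (fun b => le_trans (card_le_card (filter_subset_filter _ hsub)) (h2 b))
        hlt
      have hgne1 : ∀ i, (g i).1 ≠ e.1 := fun i => ((mem_filter.mp (hgS i)).2).1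
      have hgne2 : ∀ i, (g i).2 ≠ e.2 := fun i => ((mem_filter.mp (hgS i)).2).2
      refine ⟨Fin.cases e g, ?_, ?_, ?_⟩
      · intro j
        obtain rfl | ⟨i, rfl⟩ := j.eq_zero_or_eq_succ
        · simpa using he
        · simpa using hsub (hgS i)
      · intro a b hab
        simp only at hab
        obtain rfl | ⟨i, rfl⟩ := a.eq_zero_or_eq_succ <;>
          obtain rfl | ⟨i', rfl⟩ := b.eq_zero_or_eq_succ
        · rfl
        · rw [Fin.cases_zero, Fin.cases_succ] at hab
          exact absurd hab.symm (hgne1 i')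
        · rw [Fin.cases_succ, Fin.cases_zero] at hab
          exact absurd hab (hgne1 i)
        · rw [Fin.cases_succ, Fin.cases_succ] at hab
          exact congrArg Fin.succ (hg1 hab)
      · intro a b hab
        simp only at hab
        obtain rfl | ⟨i, rfl⟩ := a.eq_zero_or_eq_succ <;>
          obtain rfl | ⟨i', rfl⟩ := b.eq_zero_or_eq_succ
        · rfl
        · rw [Fin.cases_zero, Fin.cases_succ] at hab
          exact absurd hab.symm (hgne2 i')
        · rw [Fin.cases_succ, Fin.cases_zero] at hab
          exact absurd hab (hgne2 i)
        · rw [Fin.cases_succ, Fin.cases_succ] at hab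
          exact congrArg Fin.succ (hg2 hab)

lemma aux_pair_inj {k : ℕ} {γ : Type*} (g0 : Fin 4 → γ) (g : Fin k → Fin 4 → γ)
    (h0 : Function.Injective g0)
    (hg : Function.Injective fun q : Fin k × Fin 4 => g q.1 q.2)
    (hsep : ∀ a j j', g a j ≠ g0 j') :
    Function.Injective fun q : Fin (k+1) × Fin 4 =>
      (Fin.cases (motive := fun _ => Fin 4 → γ) g0 g q.1) q.2 := by
  rintro ⟨a, j⟩ ⟨a', j'⟩ h
  simp only at h
  obtain rfl | ⟨i, rfl⟩ := a.eq_zero_or_eq_succ <;>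
    obtain rfl | ⟨i', rfl⟩ := a'.eq_zero_or_eq_succ <;>
    simp only [Fin.cases_zero, Fin.cases_succ] at h
  · rw [h0 h]
  · exact absurd h.symm (hsep i' j' j)
  · exact absurd h (hsep i j j')
  · have h2 := hg (show (fun q : Fin k × Fin 4 => g q.1 q.2) (i, j) =
      (fun q : Fin k × Fin 4 => g q.1 q.2) (i', j') from h)
    rw [Prod.mk.injEq] at h2 ⊢
    exact ⟨by rw [h2.1], h2.2⟩

lemma aux_prepend {V ι : Type*} [DecidableEq V] [DecidableEq ι]
    {k : ℕ} {E : Finset (ι × V × V)} {Yset Bset : Finset V} {Cset : Finset ι}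
    {y0 : V} {f : Fin 4 → ι × V}
    (hy0 : y0 ∈ Yset)
    (hfB : ∀ j, (f j).2 ∈ Bset) (hfC : ∀ j, (f j).1 ∈ Cset)
    (hfE : ∀ j, ((f j).1, (y0, (f j).2)) ∈ E)
    (hf1 : Function.Injective fun j => (f j).1)
    (hf2 : Function.Injective fun j => (f j).2)
    {center' : Fin k → V} {leaf' : Fin k → Fin 4 → V} {col' : Fin k → Fin 4 → ι}
    (hc' : ∀ a, center' a ∈ Yset.erase y0)
    (hl' : ∀ a j, leaf' a j ∈ Bset \ (Finset.univ.image fun j => (f j).2))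
    (hk' : ∀ a j, col' a j ∈ Cset \ (Finset.univ.image fun j => (f j).1))
    (ic : Function.Injective center')
    (il : Function.Injective fun q : Fin k × Fin 4 => leaf' q.1 q.2)
    (ik : Function.Injective fun q : Fin k × Fin 4 => col' q.1 q.2)
    (hE' : ∀ a j, (col' a j, (center' a, leaf' a j)) ∈ E) :
    ∃ (center : Fin (k+1) → V) (leaf : Fin (k+1) → Fin 4 → V) (col : Fin (k+1) → Fin 4 → ι),
      (∀ a, center a ∈ Yset) ∧ (∀ a j, leaf a j ∈ Bset) ∧ (∀ a j, col a j ∈ Cset) ∧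
      Function.Injective center ∧
      Function.Injective (fun q : Fin (k+1) × Fin 4 => leaf q.1 q.2) ∧
      Function.Injective (fun q : Fin (k+1) × Fin 4 => col q.1 q.2) ∧
      (∀ a j, (col a j, (center a, leaf a j)) ∈ E) := by
  have hlsep : ∀ a j j', leaf' a j ≠ (f j').2 := by
    intro a j j' hcon
    have := (mem_sdiff.mp (hl' a j)).2
    exact this (mem_image.mpr ⟨j', mem_univ _, hcon.symm⟩)
  have hksep : ∀ a j j', col' a j ≠ (f j').1 := by
    intro a j j' hcon
    have := (mem_sdiff.mp (hk' a j)).2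
    exact this (mem_image.mpr ⟨j', mem_univ _, hcon.symm⟩)
  have hcsep : ∀ a, center' a ≠ y0 := fun a => (mem_erase.mp (hc' a)).1
  refine ⟨Fin.cases y0 center',
    Fin.cases (motive := fun _ => Fin 4 → V) (fun j => (f j).2) leaf',
    Fin.cases (motive := fun _ => Fin 4 → ι) (fun j => (f j).1) col', ?_, ?_, ?_, ?_, ?_, ?_, ?_⟩
  · intro a
    obtain rfl | ⟨i, rfl⟩ := a.eq_zero_or_eq_succ <;>
      simp only [Fin.cases_zero, Fin.cases_succ]
    · exact hy0
    · exact mem_of_mem_erase (hc' i)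
  · intro a j
    obtain rfl | ⟨i, rfl⟩ := a.eq_zero_or_eq_succ <;>
      simp only [Fin.cases_zero, Fin.cases_succ]
    · exact hfB j
    · exact (mem_sdiff.mp (hl' i j)).1
  · intro a j
    obtain rfl | ⟨i, rfl⟩ := a.eq_zero_or_eq_succ <;>
      simp only [Fin.cases_zero, Fin.cases_succ]
    · exact hfC j
    · exact (mem_sdiff.mp (hk' i j)).1
  · intro a a' h
    simp only at h
    obtain rfl | ⟨i, rfl⟩ := a.eq_zero_or_eq_succ <;>
      obtain rfl | ⟨i', rfl⟩ := a'.eq_zero_or_eq_succ <;>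
      simp only [Fin.cases_zero, Fin.cases_succ] at h
    · rfl
    · exact absurd h.symm (hcsep i')
    · exact absurd h (hcsep i)
    · rw [ic h]
  · exact aux_pair_inj _ _ hf2 il hlsep
  · exact aux_pair_inj _ _ hf1 ik hksep
  · intro a j
    obtain rfl | ⟨i, rfl⟩ := a.eq_zero_or_eq_succ <;>
      simp only [Fin.cases_zero, Fin.cases_succ]
    · exact hfE j
    · exact hE' i j

lemma aux_greedy {V ι : Type*} [DecidableEq V] [DecidableEq ι]
    (B : Finset V) (C : Finset ι) (E : Finset (ι × V × V)) (t : ℕ)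
    (hEB : ∀ e ∈ E, e.2.2 ∈ B) (hEC : ∀ e ∈ E, e.1 ∈ C) :
    ∀ (k : ℕ) (Av : Finset V) (UL : Finset V) (UC : Finset ι),
      k ≤ Av.card → UL.card + 4*k ≤ 4*t → UC.card + 4*k ≤ 4*t →
      (∀ y ∈ Av, (4*t - 1) * (B.card + C.card) < (E.filter fun e => e.2.1 = y).card) →
      ∃ (center : Fin k → V) (leaf : Fin k → Fin 4 → V) (col : Fin k → Fin 4 → ι),
        (∀ a, center a ∈ Av) ∧ (∀ a j, leaf a j ∈ B \ UL) ∧ (∀ a j, col a j ∈ C \ UC) ∧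
        Function.Injective center ∧
        Function.Injective (fun q : Fin k × Fin 4 => leaf q.1 q.2) ∧
        Function.Injective (fun q : Fin k × Fin 4 => col q.1 q.2) ∧
        (∀ a j, (col a j, (center a, leaf a j)) ∈ E) := by
  intro k
  induction k with
  | zero =>
      intro Av UL UC _ _ _ _
      exact ⟨fun a => a.elim0, fun a => a.elim0, fun a => a.elim0,
        fun a => a.elim0, fun a => a.elim0, fun a => a.elim0,
        fun a b h => a.elim0,
        fun q r h => q.1.elim0, fun q r h => q.1.elim0, fun a => a.elim0⟩
  | succ k ih =>
      intro Av UL UC hAv hUL hUC hbig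
      obtain ⟨y0, hy0⟩ := Finset.card_pos.mp (show 0 < Av.card by omega)
      -- t ≥ k+1 ≥ 1
      obtain ⟨t', rfl⟩ : ∃ t', t = t' + 1 := ⟨t - 1, by omega⟩
      set F : Finset (ι × V × V) :=
        E.filter (fun e => e.2.1 = y0 ∧ e.2.2 ∉ UL ∧ e.1 ∉ UC) with hFdef
      set F0 : Finset (ι × V × V) := E.filter (fun e => e.2.1 = y0) with hF0def
      -- bound the number of edges at y0 hitting used leaves
      have hcov : F0 ⊆ F ∪ (E.filter fun e => e.2.1 = y0 ∧ e.2.2 ∈ UL)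
          ∪ (E.filter fun e => e.2.1 = y0 ∧ e.2.2 ∉ UL ∧ e.1 ∈ UC) := by
        intro e he
        obtain ⟨heE, hey⟩ := mem_filter.mp he
        by_cases h1 : e.2.2 ∈ UL
        · exact mem_union_left _ (mem_union_right _ (mem_filter.mpr ⟨heE, hey, h1⟩))
        by_cases h2 : e.1 ∈ UC
        · exact mem_union_right _ (mem_filter.mpr ⟨heE, hey, h1, h2⟩)
        · exact mem_union_left _ (mem_union_left _ (mem_filter.mpr ⟨heE, hey, h1, h2⟩))
      have hbnd1 : (E.filter fun e => e.2.1 = y0 ∧ e.2.2 ∈ UL).card ≤ UL.card * C.card := by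
        have : (E.filter fun e => e.2.1 = y0 ∧ e.2.2 ∈ UL).card ≤ (UL ×ˢ C).card := by
          apply Finset.card_le_card_of_injOn (fun e => (e.2.2, e.1))
          · intro e he
            obtain ⟨heE, _, h2⟩ := mem_filter.mp he
            exact mem_product.mpr ⟨h2, hEC e heE⟩
          · intro e he e' he' hh
            obtain ⟨_, hy, _⟩ := mem_filter.mp he
            obtain ⟨_, hy', _⟩ := mem_filter.mp he'
            obtain ⟨h1, h2⟩ := Prod.mk.injEq .. ▸ hh
            exact Prod.ext h2 (Prod.ext (hy.trans hy'.symm) h1)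
        simpa [Finset.card_product] using this
      have hbnd2 : (E.filter fun e => e.2.1 = y0 ∧ e.2.2 ∉ UL ∧ e.1 ∈ UC).card
          ≤ UC.card * B.card := by
        have : (E.filter fun e => e.2.1 = y0 ∧ e.2.2 ∉ UL ∧ e.1 ∈ UC).card ≤ (UC ×ˢ B).card := by
          apply Finset.card_le_card_of_injOn (fun e => (e.1, e.2.2))
          · intro e he
            obtain ⟨heE, _, _, h3⟩ := mem_filter.mp he
            exact mem_product.mpr ⟨h3, hEB e heE⟩
          · intro e he e' he' hh
            obtain ⟨_, hy, _⟩ := mem_filter.mp he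
            obtain ⟨_, hy', _⟩ := mem_filter.mp he'
            obtain ⟨h1, h2⟩ := Prod.mk.injEq .. ▸ hh
            exact Prod.ext h1 (Prod.ext (hy.trans hy'.symm) h2)
        simpa [Finset.card_product] using this
      have hF0F : F0.card ≤ F.card + UL.card * C.card + UC.card * B.card := by
        calc F0.card ≤ _ := Finset.card_le_card hcov
          _ ≤ _ + (E.filter fun e => e.2.1 = y0 ∧ e.2.2 ∉ UL ∧ e.1 ∈ UC).card :=
              Finset.card_union_le _ _
          _ ≤ F.card + (E.filter fun e => e.2.1 = y0 ∧ e.2.2 ∈ UL).card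
              + (E.filter fun e => e.2.1 = y0 ∧ e.2.2 ∉ UL ∧ e.1 ∈ UC).card :=
            Nat.add_le_add_right (Finset.card_union_le _ _) _
          _ ≤ _ := by omega
      -- big degree bound
      have hd : (4*t'+3) * (B.card + C.card) < F0.card := by
        have := hbig y0 hy0
        have h43 : 4 * (t' + 1) - 1 = 4*t'+3 := by omega
        rwa [h43] at this
      have hULc : UL.card ≤ 4*t' := by omega
      have hUCc : UC.card ≤ 4*t' := by omega
      have hSbig : 3 * (B.card + C.card) < F.card := by
        have h1 : UL.card * C.card ≤ (4*t') * C.card := Nat.mul_le_mul_right _ hULc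
        have h2 : UC.card * B.card ≤ (4*t') * B.card := Nat.mul_le_mul_right _ hUCc
        have hexp : (4*t'+3) * (B.card + C.card)
            = 3 * (B.card + C.card) + ((4*t') * C.card + (4*t') * B.card) := by ring
        omega
      -- the pair set at y0
      set S : Finset (ι × V) := F.image (fun e => (e.1, e.2.2)) with hSdef
      have hFS : ∀ p ∈ S, (p.1, (y0, p.2)) ∈ E ∧ p.2 ∉ UL ∧ p.1 ∉ UC := by
        intro p hp
        obtain ⟨e, he, rfl⟩ := mem_image.mp hp
        obtain ⟨heE, hey, h1, h2⟩ := mem_filter.mp he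
        refine ⟨?_, h1, h2⟩
        have : e = (e.1, (e.2.1, e.2.2)) := rfl
        rw [this, hey] at heE
        exact heE
      have hScard : F.card = S.card := by
        rw [hSdef]
        rw [Finset.card_image_of_injOn]
        intro e he e' he' hh
        obtain ⟨_, hy, _⟩ := mem_filter.mp he
        obtain ⟨_, hy', _⟩ := mem_filter.mp he'
        obtain ⟨h1, h2⟩ := Prod.mk.injEq .. ▸ hh
        exact Prod.ext h1 (Prod.ext (hy.trans hy'.symm) h2)
      have hfib1 : ∀ a : ι, (S.filter fun p => p.1 = a).card ≤ B.card := by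
        intro a
        apply Finset.card_le_card_of_injOn (fun p => p.2)
        · intro p hp
          have := (hFS p (mem_filter.mp hp).1).1
          exact hEB _ this
        · intro p hp p' hp' hh
          have h1 := (mem_filter.mp hp).2
          have h1' := (mem_filter.mp hp').2
          exact Prod.ext (h1.trans h1'.symm) hh
      have hfib2 : ∀ b : V, (S.filter fun p => p.2 = b).card ≤ C.card := by
        intro b
        apply Finset.card_le_card_of_injOn (fun p => p.1)
        · intro p hp
          have := (hFS p (mem_filter.mp hp).1).1
          exact hEC _ this
        · intro p hp p' hp' hh
          have h1 := (mem_filter.mp hp).2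
          have h1' := (mem_filter.mp hp').2
          exact Prod.ext hh (h1.trans h1'.symm)
      obtain ⟨f, hfS, hf1, hf2⟩ := aux_matching B.card C.card 3 S hfib1 hfib2
        (by rw [← hScard]; linarith [hSbig])
      -- new used sets
      set NL : Finset V := Finset.univ.image (fun j => (f j).2) with hNLdef
      set NC : Finset ι := Finset.univ.image (fun j => (f j).1) with hNCdef
      have hNL4 : NL.card ≤ 4 := by
        calc NL.card ≤ Finset.univ.card := Finset.card_image_le
          _ = 4 := by simp
      have hNC4 : NC.card ≤ 4 := by
        calc NC.card ≤ Finset.univ.card := Finset.card_image_le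
          _ = 4 := by simp
      have hULNL : (UL ∪ NL).card ≤ UL.card + 4 :=
        le_trans (Finset.card_union_le _ _) (by omega)
      have hUCNC : (UC ∪ NC).card ≤ UC.card + 4 :=
        le_trans (Finset.card_union_le _ _) (by omega)
      obtain ⟨center', leaf', col', hc', hl', hk', ic, il, ikk, hE'⟩ :=
        ih (Av.erase y0) (UL ∪ NL) (UC ∪ NC)
          (by rw [Finset.card_erase_of_mem hy0]; omega)
          (by omega) (by omega)
          (fun y hy => hbig y (Finset.mem_of_mem_erase hy))
      -- assemble via prepend, with Yset := Av, Bset := B \ UL, Cset := C \ UC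
      have hstep := aux_prepend (E := E) (Yset := Av) (Bset := B \ UL) (Cset := C \ UC)
        (y0 := y0) (f := f) hy0
        (fun j => by
          have := hFS (f j) (hfS j)
          exact mem_sdiff.mpr ⟨hEB _ this.1, this.2.1⟩)
        (fun j => by
          have := hFS (f j) (hfS j)
          exact mem_sdiff.mpr ⟨hEC _ this.1, this.2.2⟩)
        (fun j => (hFS (f j) (hfS j)).1)
        hf1 hf2
        hc'
        (fun a j => by
          have h := mem_sdiff.mp (hl' a j)
          rw [Finset.mem_union] at h
          exact mem_sdiff.mpr ⟨mem_sdiff.mpr ⟨h.1, fun hc => h.2 (Or.inl hc)⟩,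
            fun hc => h.2 (Or.inr hc)⟩)
        (fun a j => by
          have h := mem_sdiff.mp (hk' a j)
          rw [Finset.mem_union] at h
          exact mem_sdiff.mpr ⟨mem_sdiff.mpr ⟨h.1, fun hc => h.2 (Or.inl hc)⟩,
            fun hc => h.2 (Or.inr hc)⟩)
        ic il ikk hE'
      obtain ⟨center, leaf, col, p1, p2, p3, p4, p5, p6, p7⟩ := hstep
      exact ⟨center, leaf, col, p1,
        fun a j => p2 a j, fun a j => p3 a j, p4, p5, p6, p7⟩

lemma aux_arithA (t' s b c b' c' y' dy g1 g2 e Ecard : ℕ)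
    (hb : b = b'+4) (hc : c = c'+4) (hy : y' = s + t')
    (H1 : (t'+1)*(b*c) ≤ Ecard) (H2 : Ecard ≤ dy + g1 + g2 + e)
    (H3 : g1 ≤ y'*(c*4)) (H4 : g2 ≤ y'*(b'*4)) (H5 : dy + 4*s*(b+c) ≤ b*c) :
    t'*(b'*c') ≤ e := by
  subst hb hc hy
  nlinarith [H1, H2, H3, H4, H5]

lemma aux_main {V ι : Type*} [DecidableEq V] [DecidableEq ι] :
    ∀ (t : ℕ) (Y B : Finset V) (C : Finset ι) (E : Finset (ι × V × V)),
      (∀ e ∈ E, e.1 ∈ C ∧ e.2.1 ∈ Y ∧ e.2.2 ∈ B) →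
      7 * Y.card < B.card → 5 * B.card ≤ 3 * C.card →
      t ≤ Y.card → t * (B.card * C.card) ≤ E.card →
      ∃ (center : Fin t → V) (leaf : Fin t → Fin 4 → V) (col : Fin t → Fin 4 → ι),
        (∀ a, center a ∈ Y) ∧ (∀ a j, leaf a j ∈ B) ∧ (∀ a j, col a j ∈ C) ∧
        Function.Injective center ∧
        Function.Injective (fun q : Fin t × Fin 4 => leaf q.1 q.2) ∧
        Function.Injective (fun q : Fin t × Fin 4 => col q.1 q.2) ∧
        (∀ a j, (col a j, (center a, leaf a j)) ∈ E) := by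
  intro t
  induction t with
  | zero =>
      intro Y B C E _ _ _ _ _
      exact ⟨fun a => a.elim0, fun a => a.elim0, fun a => a.elim0,
        fun a => a.elim0, fun a => a.elim0, fun a => a.elim0,
        fun a b h => a.elim0, fun q r h => q.1.elim0, fun q r h => q.1.elim0,
        fun a => a.elim0⟩
  | succ t' ih =>
      intro Y B C E hE h7 h53 ht hcard
      classical
      have hy1 : 1 ≤ Y.card := by omega
      have hb8 : 8 ≤ B.card := by omega
      have hc14 : 14 ≤ C.card := by omega
      set d : V → ℕ := fun y => (E.filter fun e => e.2.1 = y).card with hddef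
      have hd_le : ∀ y, d y ≤ B.card * C.card := by
        intro y
        have : (E.filter fun e => e.2.1 = y).card ≤ (C ×ˢ B).card := by
          apply Finset.card_le_card_of_injOn (fun e => (e.1, e.2.2))
          · intro e he
            obtain ⟨heE, _⟩ := mem_filter.mp he
            exact mem_product.mpr ⟨(hE e heE).1, (hE e heE).2.2⟩
          · intro e he e' he' hh
            obtain ⟨_, hy⟩ := mem_filter.mp he
            obtain ⟨_, hy'⟩ := mem_filter.mp he'
            obtain ⟨h1, h2⟩ := Prod.mk.injEq .. ▸ hh
            exact Prod.ext h1 (Prod.ext (hy.trans hy'.symm) h2)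
        calc d y ≤ (C ×ˢ B).card := this
          _ = B.card * C.card := by rw [Finset.card_product]; ring
      have harith : 4 * Y.card * (B.card + C.card) < B.card * C.card + (B.card + C.card) := by
        have k1 : (7*Y.card+1) * (B.card + C.card) ≤ B.card * (B.card + C.card) :=
          Nat.mul_le_mul_right _ (by omega)
        have k2 : 5 * B.card * B.card ≤ 3 * C.card * B.card :=
          Nat.mul_le_mul_right _ h53
        nlinarith [k1, k2, hb8, hc14]
      by_cases hA : ∃ y ∈ Y, 3*(B.card + C.card) < d y ∧
          d y + 4*(Y.card - (t'+1))*(B.card + C.card) ≤ B.card * C.card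
      · -- Case A: a star at a medium-degree vertex, then recurse
        obtain ⟨y0, hy0Y, hdT, hdK⟩ := hA
        set F0 : Finset (ι × V × V) := E.filter (fun e => e.2.1 = y0) with hF0def
        set S : Finset (ι × V) := F0.image (fun e => (e.1, e.2.2)) with hSdef
        have hFS : ∀ p ∈ S, (p.1, (y0, p.2)) ∈ E := by
          intro p hp
          obtain ⟨e, he, rfl⟩ := mem_image.mp hp
          obtain ⟨heE, hey⟩ := mem_filter.mp he
          have : e = (e.1, (e.2.1, e.2.2)) := rfl
          rw [this, hey] at heE
          exact heE
        have hScard : F0.card = S.card := by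
          rw [hSdef]
          rw [Finset.card_image_of_injOn]
          intro e he e' he' hh
          obtain ⟨_, hy⟩ := mem_filter.mp he
          obtain ⟨_, hy'⟩ := mem_filter.mp he'
          obtain ⟨h1, h2⟩ := Prod.mk.injEq .. ▸ hh
          exact Prod.ext h1 (Prod.ext (hy.trans hy'.symm) h2)
        have hfib1 : ∀ a : ι, (S.filter fun p => p.1 = a).card ≤ B.card := by
          intro a
          apply Finset.card_le_card_of_injOn (fun p => p.2)
          · intro p hp
            exact (hE _ (hFS p (mem_filter.mp hp).1)).2.2
          · intro p hp p' hp' hh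
            have h1 := (mem_filter.mp hp).2
            have h1' := (mem_filter.mp hp').2
            exact Prod.ext (h1.trans h1'.symm) hh
        have hfib2 : ∀ b : V, (S.filter fun p => p.2 = b).card ≤ C.card := by
          intro b
          apply Finset.card_le_card_of_injOn (fun p => p.1)
          · intro p hp
            exact (hE _ (hFS p (mem_filter.mp hp).1)).1
          · intro p hp p' hp' hh
            have h1 := (mem_filter.mp hp).2
            have h1' := (mem_filter.mp hp').2
            exact Prod.ext hh (h1.trans h1'.symm)
        obtain ⟨f, hfS, hf1, hf2⟩ := aux_matching B.card C.card 3 S hfib1 hfib2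
          (by rw [← hScard]; exact lt_of_le_of_lt (by linarith) hdT)
        have hfE : ∀ j, ((f j).1, (y0, (f j).2)) ∈ E := fun j => hFS (f j) (hfS j)
        have hfB : ∀ j, (f j).2 ∈ B := fun j => (hE _ (hfE j)).2.2
        have hfC : ∀ j, (f j).1 ∈ C := fun j => (hE _ (hfE j)).1
        set L : Finset V := Finset.univ.image (fun j => (f j).2) with hLdef
        set D : Finset ι := Finset.univ.image (fun j => (f j).1) with hDdef
        have hL4 : L.card = 4 := by
          rw [hLdef, Finset.card_image_of_injective _ hf2]; simp
        have hD4 : D.card = 4 := by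
          rw [hDdef, Finset.card_image_of_injective _ hf1]; simp
        have hLB : L ⊆ B := by
          intro x hx
          obtain ⟨j, _, rfl⟩ := mem_image.mp hx
          exact hfB j
        have hDC : D ⊆ C := by
          intro x hx
          obtain ⟨j, _, rfl⟩ := mem_image.mp hx
          exact hfC j
        set Y' : Finset V := Y.erase y0 with hY'def
        set B' : Finset V := B \ L with hB'def
        set C' : Finset ι := C \ D with hC'def
        set E' : Finset (ι × V × V) :=
          E.filter (fun e => ¬ e.2.1 = y0 ∧ e.2.2 ∉ L ∧ e.1 ∉ D) with hE'def
        have hE'mem : ∀ e ∈ E', e.1 ∈ C' ∧ e.2.1 ∈ Y' ∧ e.2.2 ∈ B' := by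
          intro e he
          obtain ⟨heE, h1, h2, h3⟩ := mem_filter.mp he
          exact ⟨mem_sdiff.mpr ⟨(hE e heE).1, h3⟩,
            mem_erase.mpr ⟨h1, (hE e heE).2.1⟩,
            mem_sdiff.mpr ⟨(hE e heE).2.2, h2⟩⟩
        have hYc : Y'.card + 1 = Y.card := Finset.card_erase_add_one hy0Y
        have h4B : 4 ≤ B.card := by omega
        have hBc : B'.card + 4 = B.card := by
          rw [hB'def, Finset.card_sdiff_of_subset hLB, hL4]
          have := Finset.card_le_card hLB
          omega
        have hCc : C'.card + 4 = C.card := by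
          rw [hC'def, Finset.card_sdiff_of_subset hDC, hD4]
          have := Finset.card_le_card hDC
          rw [hD4] at this
          omega
        -- edge count for the reduced instance
        set G1 : Finset (ι × V × V) :=
          E.filter (fun e => ¬ e.2.1 = y0 ∧ e.2.2 ∈ L) with hG1def
        set G2 : Finset (ι × V × V) :=
          E.filter (fun e => ¬ e.2.1 = y0 ∧ e.2.2 ∉ L ∧ e.1 ∈ D) with hG2def
        have hcov : E ⊆ F0 ∪ G1 ∪ G2 ∪ E' := by
          intro e he
          by_cases q1 : e.2.1 = y0
          · exact mem_union_left _ (mem_union_left _ (mem_union_left _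
              (mem_filter.mpr ⟨he, q1⟩)))
          by_cases q2 : e.2.2 ∈ L
          · exact mem_union_left _ (mem_union_left _ (mem_union_right _
              (mem_filter.mpr ⟨he, q1, q2⟩)))
          by_cases q3 : e.1 ∈ D
          · exact mem_union_left _ (mem_union_right _ (mem_filter.mpr ⟨he, q1, q2, q3⟩))
          · exact mem_union_right _ (mem_filter.mpr ⟨he, q1, q2, q3⟩)
        have hcount : E.card ≤ d y0 + G1.card + G2.card + E'.card := by
          have c1 : E.card ≤ (F0 ∪ G1 ∪ G2 ∪ E').card := Finset.card_le_card hcov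
          have c2 : (F0 ∪ G1 ∪ G2 ∪ E').card ≤ (F0 ∪ G1 ∪ G2).card + E'.card :=
            Finset.card_union_le _ _
          have c3 : (F0 ∪ G1 ∪ G2).card ≤ (F0 ∪ G1).card + G2.card :=
            Finset.card_union_le _ _
          have c4 : (F0 ∪ G1).card ≤ F0.card + G1.card := Finset.card_union_le _ _
          have : F0.card = d y0 := rfl
          omega
        have hG1 : G1.card ≤ Y'.card * ((C.card) * 4) := by
          have : G1.card ≤ (Y' ×ˢ (C ×ˢ L)).card := by
            apply Finset.card_le_card_of_injOn (fun e => (e.2.1, e.1, e.2.2))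
            · intro e he
              obtain ⟨heE, h1, h2⟩ := mem_filter.mp he
              exact mem_product.mpr ⟨mem_erase.mpr ⟨h1, (hE e heE).2.1⟩,
                mem_product.mpr ⟨(hE e heE).1, h2⟩⟩
            · intro e _ e' _ hh
              obtain ⟨a1, hrest⟩ := Prod.mk.injEq .. ▸ hh
              obtain ⟨a2, a3⟩ := Prod.mk.injEq .. ▸ hrest
              exact Prod.ext a2 (Prod.ext a1 a3)
          calc G1.card ≤ (Y' ×ˢ (C ×ˢ L)).card := this
            _ = Y'.card * (C.card * 4) := by
                rw [Finset.card_product, Finset.card_product, hL4]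
        have hG2 : G2.card ≤ Y'.card * (B'.card * 4) := by
          have : G2.card ≤ (Y' ×ˢ (B' ×ˢ D)).card := by
            apply Finset.card_le_card_of_injOn (fun e => (e.2.1, e.2.2, e.1))
            · intro e he
              obtain ⟨heE, h1, h2, h3⟩ := mem_filter.mp he
              exact mem_product.mpr ⟨mem_erase.mpr ⟨h1, (hE e heE).2.1⟩,
                mem_product.mpr ⟨mem_sdiff.mpr ⟨(hE e heE).2.2, h2⟩, h3⟩⟩
            · intro e _ e' _ hh
              obtain ⟨a1, hrest⟩ := Prod.mk.injEq .. ▸ hh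
              obtain ⟨a2, a3⟩ := Prod.mk.injEq .. ▸ hrest
              exact Prod.ext a3 (Prod.ext a1 a2)
          calc G2.card ≤ (Y' ×ˢ (B' ×ˢ D)).card := this
            _ = Y'.card * (B'.card * 4) := by
                rw [Finset.card_product, Finset.card_product, hD4]
        -- arithmetic
        obtain ⟨s, hs⟩ : ∃ s, Y.card = s + (t'+1) := ⟨Y.card - (t'+1), by omega⟩
        have hsub : Y.card - (t'+1) = s := by omega
        rw [hsub] at hdK
        have hy'st : Y'.card = s + t' := by omega
        have hgoal : t' * (B'.card * C'.card) ≤ E'.card :=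
          aux_arithA t' s B.card C.card B'.card C'.card Y'.card (d y0)
            G1.card G2.card E'.card E.card (by omega) (by omega) hy'st
            hcard hcount hG1 hG2 hdK
        obtain ⟨center', leaf', col', q1, q2, q3, q4, q5, q6, q7⟩ :=
          ih Y' B' C' E' hE'mem (by omega) (by omega) (by omega) hgoal
        exact aux_prepend hy0Y hfB hfC hfE hf1 hf2 q1 q2 q3 q4 q5 q6 (fun a j => Finset.filter_subset _ _ (q7 a j))
      · -- Case B: many vertices of huge degree, build all stars greedily
        push_neg at hA
        set Big : Finset V := Y.filter (fun y => 3*(B.card + C.card) < d y) with hBigdef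
        have hsum : E.card = ∑ y ∈ Y, d y :=
          Finset.card_eq_sum_card_fiberwise (fun e he => (hE e he).2.1)
        have hsplit : ∑ y ∈ Big, d y + ∑ y ∈ Y.filter (fun y => ¬ 3*(B.card + C.card) < d y), d y
            = ∑ y ∈ Y, d y := Finset.sum_filter_add_sum_filter_not _ _ _
        have hBigle : ∑ y ∈ Big, d y ≤ Big.card * (B.card * C.card) := by
          calc ∑ y ∈ Big, d y ≤ Big.card • (B.card * C.card) :=
              Finset.sum_le_card_nsmul _ _ _ (fun y _ => hd_le y)
            _ = Big.card * (B.card * C.card) := by rw [smul_eq_mul]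
        have hrest : ∑ y ∈ Y.filter (fun y => ¬ 3*(B.card + C.card) < d y), d y
            ≤ Y.card * (3*(B.card + C.card)) := by
          calc ∑ y ∈ Y.filter (fun y => ¬ 3*(B.card + C.card) < d y), d y
              ≤ (Y.filter (fun y => ¬ 3*(B.card + C.card) < d y)).card • (3*(B.card + C.card)) :=
              Finset.sum_le_card_nsmul _ _ _ (fun y hy => by
                have := (mem_filter.mp hy).2
                omega)
            _ = (Y.filter (fun y => ¬ 3*(B.card + C.card) < d y)).card * (3*(B.card + C.card)) := by
              rw [smul_eq_mul]
            _ ≤ Y.card * (3*(B.card + C.card)) :=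
              Nat.mul_le_mul_right _ (Finset.card_filter_le _ _)
        have hBig_t : t'+1 ≤ Big.card := by
          by_contra hcon
          have hBt : Big.card ≤ t' := by omega
          have k1 : (t'+1) * (B.card * C.card) ≤
              t' * (B.card * C.card) + Y.card * (3*(B.card + C.card)) := by
            calc (t'+1) * (B.card * C.card) ≤ E.card := hcard
              _ = ∑ y ∈ Y, d y := hsum
              _ = _ := hsplit.symm
              _ ≤ Big.card * (B.card * C.card) + Y.card * (3*(B.card + C.card)) := by
                  have := hBigle; have := hrest; omega
              _ ≤ t' * (B.card * C.card) + Y.card * (3*(B.card + C.card)) := by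
                  have := Nat.mul_le_mul_right (B.card * C.card) hBt
                  omega
          have k2 : B.card * C.card ≤ Y.card * (3*(B.card + C.card)) := by nlinarith [k1]
          nlinarith [harith, k2, hy1]
        have HBigdeg : ∀ y ∈ Big, (4*(t'+1) - 1) * (B.card + C.card) < d y := by
          intro y hy
          obtain ⟨hyY, hyT⟩ := mem_filter.mp hy
          have h1 := hA y hyY hyT
          obtain ⟨s, hs⟩ : ∃ s, Y.card = s + (t'+1) := ⟨Y.card - (t'+1), by omega⟩
          have hsub : Y.card - (t'+1) = s := by omega
          rw [hsub] at h1
          have h2 : 4 * (s + (t'+1)) * (B.card + C.card)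
              < B.card * C.card + (B.card + C.card) := by rw [← hs]; exact harith
          have h3 : (4*(t'+1) - 1) = 4*t'+3 := by omega
          rw [h3]
          nlinarith [h1, h2]
        obtain ⟨center, leaf, col, p1, p2, p3, p4, p5, p6, p7⟩ :=
          aux_greedy B C E (t'+1) (fun e he => (hE e he).2.2) (fun e he => (hE e he).1)
            (t'+1) Big ∅ ∅ hBig_t (by simp) (by simp) HBigdeg
        exact ⟨center, leaf, col,
          fun a => (mem_filter.mp (p1 a)).1,
          fun a j => (mem_sdiff.mp (p2 a j)).1,
          fun a j => (mem_sdiff.mp (p3 a j)).1,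
          p4, p5, p6, p7⟩

/-- Lemma: many edges in a bipartite collection force `t` pairwise disjoint rainbow stars
`S₅` with centers in `Y` and four leaves in `B`, using `4t` distinct colors. -/
theorem stmt_9 {V ι : Type*} [DecidableEq V] [DecidableEq ι]
    (Y B : Finset V) (hYB : Disjoint Y B)
    (C : Finset ι) (Gs : ι → SimpleGraph V)
    (hbip : ∀ i ∈ C, ∀ u v : V, (Gs i).Adj u v → (u ∈ Y ∧ v ∈ B) ∨ (u ∈ B ∧ v ∈ Y))
    (hY : 7 * Y.card < B.card) (hC : 5 * B.card ≤ 3 * C.card)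
    (t : ℕ) (ht1 : 1 ≤ t) (ht2 : t ≤ Y.card)
    (hedges : t * B.card * C.card ≤ ∑ i ∈ C, ((Gs i).edgeSet.ncard)) :
    ∃ (center : Fin t → V) (leaf : Fin t → Fin 4 → V) (col : Fin t → Fin 4 → ι),
      (∀ k, center k ∈ Y) ∧ (∀ k j, leaf k j ∈ B) ∧ (∀ k j, col k j ∈ C) ∧
      Function.Injective center ∧
      Function.Injective (fun q : Fin t × Fin 4 => leaf q.1 q.2) ∧
      Function.Injective (fun q : Fin t × Fin 4 => col q.1 q.2) ∧
      (∀ k j, (Gs (col k j)).Adj (center k) (leaf k j)) := by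
  classical
  set E : Finset (ι × V × V) :=
    (C ×ˢ Y ×ˢ B).filter (fun e => (Gs e.1).Adj e.2.1 e.2.2) with hEdef
  have hE : ∀ e ∈ E, e.1 ∈ C ∧ e.2.1 ∈ Y ∧ e.2.2 ∈ B := by
    intro e he
    have h1 := mem_product.mp (mem_filter.mp he).1
    have h2 := mem_product.mp h1.2
    exact ⟨h1.1, h2.1, h2.2⟩
  -- each color's edge count is at most the fiber in E
  have hcount : ∀ i ∈ C, (Gs i).edgeSet.ncard ≤ (E.filter fun e => e.1 = i).card := by
    intro i hi
    have hsub : (Gs i).edgeSet ⊆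
        ↑((E.filter fun e => e.1 = i).image (fun e => s(e.2.1, e.2.2))) := by
      intro x hx
      induction x with
      | h u v =>
        have hadj : (Gs i).Adj u v := hx
        rcases hbip i hi u v hadj with ⟨hu, hv⟩ | ⟨hu, hv⟩
        · refine Finset.mem_coe.mpr (mem_image.mpr ⟨(i, u, v), ?_, rfl⟩)
          exact mem_filter.mpr ⟨mem_filter.mpr ⟨mem_product.mpr ⟨hi,
            mem_product.mpr ⟨hu, hv⟩⟩, hadj⟩, rfl⟩
        · refine Finset.mem_coe.mpr (mem_image.mpr ⟨(i, v, u), ?_, ?_⟩)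
          · exact mem_filter.mpr ⟨mem_filter.mpr ⟨mem_product.mpr ⟨hi,
              mem_product.mpr ⟨hv, hu⟩⟩, hadj.symm⟩, rfl⟩
          · exact Sym2.eq_swap
    calc (Gs i).edgeSet.ncard
        ≤ (↑((E.filter fun e => e.1 = i).image (fun e => s(e.2.1, e.2.2))) : Set (Sym2 V)).ncard :=
          Set.ncard_le_ncard hsub (Finset.finite_toSet _)
      _ = ((E.filter fun e => e.1 = i).image (fun e => s(e.2.1, e.2.2))).card :=
          Set.ncard_coe_finset _
      _ ≤ (E.filter fun e => e.1 = i).card := Finset.card_image_le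
  have hsum : t * (B.card * C.card) ≤ E.card := by
    calc t * (B.card * C.card) = t * B.card * C.card := by ring
      _ ≤ ∑ i ∈ C, ((Gs i).edgeSet.ncard) := hedges
      _ ≤ ∑ i ∈ C, (E.filter fun e => e.1 = i).card := Finset.sum_le_sum hcount
      _ = E.card := (Finset.card_eq_sum_card_fiberwise (fun e he => (hE e he).1)).symm
  obtain ⟨center, leaf, col, p1, p2, p3, p4, p5, p6, p7⟩ :=
    aux_main t Y B C E hE hY hC ht2 hsum
  exact ⟨center, leaf, col, p1, p2, p3, p4, p5, p6,
    fun k j => (mem_filter.mp (p7 k j)).2⟩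
end

section
/- Let C be a set of colors and G = {G_i[Y,B] : i ∈ C} a collection of bipartite graphs with common bipartition (Y,B) such that 7|Y| < |B| ≤ (3/5)|C|. If Σ_{i ∈ C} |E(G_i[Y,B])| ≥ (t+1)·|B|·|C| for an integer t ≥ 0 with t+1 ≤ |Y|, then there exists a vertex w ∈ Y such that d_{G_i}(w, B) ≥ 4t+4 for at least 4t+4 colors i ∈ C. -/
open SimpleGraph

open scoped Classical in
/-- Counting claim: with at least `(t+1)|B||C|` edges in a bipartite collection, some vertex
`w ∈ Y` has `d_{G_i}(w,B) ≥ 4t+4` for at least `4t+4` colors `i ∈ C`. -/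
theorem stmt_10 {V ι : Type*} [DecidableEq V] [DecidableEq ι]
    (Y B : Finset V) (hYB : Disjoint Y B)
    (C : Finset ι) (Gs : ι → SimpleGraph V)
    (hbip : ∀ i ∈ C, ∀ u v : V, (Gs i).Adj u v → (u ∈ Y ∧ v ∈ B) ∨ (u ∈ B ∧ v ∈ Y))
    (hY : 7 * Y.card < B.card) (hC : 5 * B.card ≤ 3 * C.card)
    (t : ℕ) (ht : t + 1 ≤ Y.card)
    (hedges : (t + 1) * B.card * C.card ≤ ∑ i ∈ C, ((Gs i).edgeSet.ncard)) :
    ∃ w ∈ Y, 4 * t + 4 ≤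
      (C.filter (fun i => 4 * t + 4 ≤ ({v : V | v ∈ B ∧ (Gs i).Adj w v}).ncard)).card := by
  by_contra hcon
  push_neg at hcon
  set d : ι → V → ℕ := fun i w => (B.filter (fun v => (Gs i).Adj w v)).card with hd
  have hset : ∀ i w, ({v : V | v ∈ B ∧ (Gs i).Adj w v}).ncard = d i w := by
    intro i w
    have h1 : {v : V | v ∈ B ∧ (Gs i).Adj w v} =
        ↑(B.filter (fun v => (Gs i).Adj w v)) := by
      ext v; simp
    rw [h1, Set.ncard_coe_finset]
  have hedge : ∀ i ∈ C, (Gs i).edgeSet.ncard = ∑ w ∈ Y, d i w := by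
    intro i hi
    have hS : (Gs i).edgeSet = (fun p : V × V => s(p.1, p.2)) ''
        ↑((Y ×ˢ B).filter (fun p => (Gs i).Adj p.1 p.2)) := by
      ext e
      refine Sym2.inductionOn e (fun u v => ?_)
      simp only [mem_edgeSet, Set.mem_image, Finset.coe_filter, Set.mem_setOf_eq,
        Finset.mem_product]
      constructor
      · intro h
        rcases hbip i hi u v h with ⟨hu, hv⟩ | ⟨hu, hv⟩
        · exact ⟨(u, v), ⟨⟨hu, hv⟩, h⟩, rfl⟩
        · exact ⟨(v, u), ⟨⟨hv, hu⟩, h.symm⟩, Sym2.eq_swap⟩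
      · rintro ⟨⟨a, b⟩, ⟨⟨ha, hb⟩, hab⟩, he⟩
        rw [Sym2.eq_iff] at he
        rcases he with ⟨h1, h2⟩ | ⟨h1, h2⟩
        · rwa [h1, h2] at hab
        · rw [h1, h2] at hab; exact hab.symm
    have hinj : Set.InjOn (fun p : V × V => s(p.1, p.2))
        ↑((Y ×ˢ B).filter (fun p => (Gs i).Adj p.1 p.2)) := by
      rintro ⟨a, b⟩ hp ⟨c, e⟩ hq h
      simp only [Finset.coe_filter, Set.mem_setOf_eq, Finset.mem_product] at hp hq
      simp only [Sym2.eq_iff] at h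
      rcases h with ⟨h1, h2⟩ | ⟨h1, h2⟩
      · rw [h1, h2]
      · exfalso
        have hae : e ∈ Y := h1 ▸ hp.1.1
        exact Finset.disjoint_left.mp hYB hae hq.1.2
    rw [hS, Set.ncard_image_of_injOn hinj, Set.ncard_coe_finset]
    rw [Finset.card_filter, Finset.sum_product]
    refine Finset.sum_congr rfl fun w _ => ?_
    show _ = (Finset.filter (fun v => (Gs i).Adj w v) B).card
    rw [Finset.card_filter]
  have hbound : ∀ w ∈ Y, ∑ i ∈ C, d i w ≤ (4 * t + 3) * B.card + (4 * t + 3) * C.card := by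
    intro w hw
    set F := C.filter (fun i => 4 * t + 4 ≤ d i w) with hF
    have hFcard : F.card ≤ 4 * t + 3 := by
      have := hcon w hw
      have heq : (C.filter (fun i => 4 * t + 4 ≤
          ({v : V | v ∈ B ∧ (Gs i).Adj w v}).ncard)) = F := by
        apply Finset.filter_congr
        intro i _
        rw [hset i w]
      rw [heq] at this
      omega
    have hFC : F ⊆ C := Finset.filter_subset _ _
    have hsplit : ∑ i ∈ C, d i w = ∑ i ∈ F, d i w + ∑ i ∈ C \ F, d i w := by
      rw [← Finset.sum_sdiff hFC]; ring
    have h1 : ∑ i ∈ F, d i w ≤ (4 * t + 3) * B.card := by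
      calc ∑ i ∈ F, d i w ≤ ∑ _i ∈ F, B.card :=
            Finset.sum_le_sum (fun i _ => Finset.card_filter_le _ _)
        _ = F.card * B.card := by rw [Finset.sum_const, smul_eq_mul]
        _ ≤ (4 * t + 3) * B.card := Nat.mul_le_mul_right _ hFcard
    have h2 : ∑ i ∈ C \ F, d i w ≤ (4 * t + 3) * C.card := by
      calc ∑ i ∈ C \ F, d i w ≤ ∑ _i ∈ C \ F, (4 * t + 3) := by
            apply Finset.sum_le_sum
            intro i hi
            rw [Finset.mem_sdiff, hF, Finset.mem_filter] at hi
            push_neg at hi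
            have hlt := hi.2 hi.1
            omega
        _ = (C \ F).card * (4 * t + 3) := by rw [Finset.sum_const, smul_eq_mul]
        _ ≤ C.card * (4 * t + 3) :=
            Nat.mul_le_mul_right _ (Finset.card_le_card (Finset.sdiff_subset))
        _ = (4 * t + 3) * C.card := Nat.mul_comm _ _
    rw [hsplit]
    exact Nat.add_le_add h1 h2
  have htotal : ∑ i ∈ C, (Gs i).edgeSet.ncard ≤
      Y.card * ((4 * t + 3) * B.card + (4 * t + 3) * C.card) := by
    calc ∑ i ∈ C, (Gs i).edgeSet.ncard = ∑ i ∈ C, ∑ w ∈ Y, d i w :=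
          Finset.sum_congr rfl hedge
      _ = ∑ w ∈ Y, ∑ i ∈ C, d i w := Finset.sum_comm
      _ ≤ ∑ _w ∈ Y, ((4 * t + 3) * B.card + (4 * t + 3) * C.card) :=
          Finset.sum_le_sum hbound
      _ = Y.card * ((4 * t + 3) * B.card + (4 * t + 3) * C.card) := by
          rw [Finset.sum_const, smul_eq_mul]
  have hkey : (t + 1) * B.card * C.card ≤
      Y.card * ((4 * t + 3) * B.card + (4 * t + 3) * C.card) := le_trans hedges htotal
  set y := Y.card
  set b := B.card
  set c := C.card
  have hy1 : 1 ≤ y := le_trans (Nat.le_add_left 1 t) ht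
  nlinarith [hkey, hY, hC, hy1, ht, Nat.mul_le_mul_left (5 * b) hC,
    Nat.mul_le_mul_right ((4 * t + 3) * (b + c)) (Nat.le_of_lt_succ (Nat.lt_succ_of_lt hY)),
    mul_pos (Nat.lt_of_lt_of_le (Nat.lt_of_le_of_lt (Nat.zero_le _) hY) le_rfl) hy1]
end

section
/- Let n be even, V a vertex set of size n, and A ∪ B a partition of V with |A| = |B| = n/2. Suppose G = {G_1,...,G_n} is a graph collection on V such that there are vertices u, u' ∈ A and v, v' ∈ B with: E(G_1[A,B]) = {uv, u'v'}, E(G_2[A,B]) = {uv', u'v}, and for every j ≥ 3, G_j has no edge between A and B. Then G contains no transversal Hamilton cycle. -/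
open SimpleGraph

/-- A transversal Hamilton cycle in a collection of `m` graphs on `V`. -/
def HasTransHamCycle {V : Type*} [DecidableEq V] {m : ℕ} (Gs : Fin m → SimpleGraph V) : Prop :=
  ∃ (v : V) (p : (⊤ : SimpleGraph V).Walk v v),
    p.IsHamiltonianCycle ∧
      ∃ φ : Fin p.edges.length ≃ Fin m, ∀ i, p.edges.get i ∈ (Gs (φ i)).edgeSet

private lemma aux_mono {P : ℕ → Prop} {a b : ℕ} (hab : a ≤ b)
    (h : ∀ k, a ≤ k → k < b → P k → P (k + 1)) (ha : P a) : P b := by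
  induction b, hab using Nat.le_induction with
  | base => exact ha
  | succ b hb ih =>
    exact h b hb (Nat.lt_succ_self b)
      (ih fun k hk hkb => h k hk (hkb.trans (Nat.lt_succ_self b)))

private lemma aux_flip {P : ℕ → Prop} {a b : ℕ} (hab : a ≤ b) (ha : P a) (hb : ¬ P b) :
    ∃ i, a ≤ i ∧ i < b ∧ P i ∧ ¬ P (i + 1) := by
  by_contra hcon
  push_neg at hcon
  exact hb (aux_mono hab hcon ha)

private lemma aux_const {P : ℕ → Prop} {a b : ℕ} (hab : a ≤ b)
    (h : ∀ k, a ≤ k → k < b → (P k ↔ P (k + 1))) : P a ↔ P b := by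
  induction b, hab using Nat.le_induction with
  | base => exact Iff.rfl
  | succ b hb ih =>
    exact (ih fun k hk hkb => h k hk (hkb.trans (Nat.lt_succ_self b))).trans
      (h b hb (Nat.lt_succ_self b))

private lemma aux_support_getElem {V : Type*} {G : SimpleGraph V} {x y : V} (p : G.Walk x y)
    (i : ℕ) (h : i < p.support.length) : p.support[i] = p.getVert i := by
  induction p generalizing i with
  | nil =>
    simp only [SimpleGraph.Walk.support_nil, List.length_singleton] at h
    interval_cases i
    rfl
  | cons hadj q ih =>
    cases i with
    | zero => rfl
    | succ i =>
      simp only [SimpleGraph.Walk.support_cons] at h ⊢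
      rw [List.getElem_cons_succ]
      exact ih i (by simpa using h)

private lemma aux_edges_getElem {V : Type*} {G : SimpleGraph V} {x y : V} (p : G.Walk x y)
    (i : ℕ) (h : i < p.edges.length) :
    p.edges[i] = s(p.getVert i, p.getVert (i + 1)) := by
  induction p generalizing i with
  | nil => simp [SimpleGraph.Walk.edges_nil] at h
  | cons hadj q ih =>
    cases i with
    | zero =>
      simp [SimpleGraph.Walk.edges_cons, SimpleGraph.Walk.getVert_cons_succ,
        SimpleGraph.Walk.getVert_zero]
    | succ i =>
      simp only [SimpleGraph.Walk.edges_cons, List.getElem_cons_succ,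
        SimpleGraph.Walk.getVert_cons_succ]
      exact ih i (by simpa [SimpleGraph.Walk.edges_cons] using h)

/-- The extremal collection whose crossing edges are exactly `{uv, u'v'}` in color `c₁`,
`{uv', u'v}` in color `c₂`, and none in any other color, has no transversal Hamilton
cycle. -/
theorem stmt_16 {V : Type*} [Fintype V] [DecidableEq V] (n : ℕ)
    (hcard : Fintype.card V = n) (heven : Even n)
    (A : Set V) (hA : A.ncard = n / 2)
    (Gs : Fin n → SimpleGraph V) (c1 c2 : Fin n) (hc : c1 ≠ c2)
    (u u' v v' : V) (hu : u ∈ A) (hu' : u' ∈ A) (hv : v ∉ A) (hv' : v' ∉ A)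
    (huu : u ≠ u') (hvv : v ≠ v')
    (h1 : ∀ a b, a ∈ A → b ∉ A →
      ((Gs c1).Adj a b ↔ (a = u ∧ b = v) ∨ (a = u' ∧ b = v')))
    (h2 : ∀ a b, a ∈ A → b ∉ A →
      ((Gs c2).Adj a b ↔ (a = u ∧ b = v') ∨ (a = u' ∧ b = v)))
    (h3 : ∀ j, j ≠ c1 → j ≠ c2 → ∀ a b, a ∈ A → b ∉ A → ¬ (Gs j).Adj a b) :
    ¬ HasTransHamCycle Gs := by
  classical
  rintro ⟨v0, p, hp, φ, hφ⟩
  have hlen : p.length = n := by rw [hp.length_eq, hcard]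
  have hel : p.edges.length = n := by rw [SimpleGraph.Walk.length_edges, hlen]
  set g : ℕ → V := p.getVert with hgdef
  have hg0 : g 0 = v0 := p.getVert_zero
  have hgn0 : g n = g 0 := by
    rw [hg0, ← hlen]; exact p.getVert_length
  -- injectivity of g on [1, n]
  have hnodup : p.support.tail.Nodup := hp.isCycle.support_nodup
  have hslen : p.support.length = n + 1 := by rw [SimpleGraph.Walk.length_support, hlen]
  have htlen : p.support.tail.length = n := by rw [List.length_tail, hslen]; omega
  have hkey : ∀ m (hm : m - 1 < p.support.tail.length) (h1m : 1 ≤ m),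
      p.support.tail.get ⟨m - 1, hm⟩ = g m := by
    intro m hm h1m
    rw [List.get_tail, List.get_eq_getElem, aux_support_getElem]
    show p.getVert (m - 1 + 1) = g m
    congr 1
    omega
  have hinj : ∀ k l, 1 ≤ k → k ≤ n → 1 ≤ l → l ≤ n → g k = g l → k = l := by
    intro k l hk1 hkn hl1 hln hkl
    have hk' : k - 1 < p.support.tail.length := by omega
    have hl' : l - 1 < p.support.tail.length := by omega
    have := hnodup.get_inj_iff (i := ⟨k - 1, hk'⟩) (j := ⟨l - 1, hl'⟩)
    rw [hkey k hk' hk1, hkey l hl' hl1] at this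
    have := this.mp hkl
    have := Fin.mk.injEq _ _ _ _ ▸ this
    omega
  have hlt : ∀ {k}, k < n → k < p.edges.length := fun {k} hk => by rw [hel]; exact hk
  -- adjacency of consecutive vertices in the assigned graph
  have hAdj : ∀ k (hk : k < n), (Gs (φ ⟨k, hlt hk⟩)).Adj (g k) (g (k + 1)) := by
    intro k hk
    have := hφ ⟨k, hlt hk⟩
    rw [List.get_eq_getElem, aux_edges_getElem p k (hlt hk), SimpleGraph.mem_edgeSet] at this
    exact this
  -- crossing edges can only have color c1 or c2
  have hcol : ∀ k (hk : k < n), ¬(g k ∈ A ↔ g (k + 1) ∈ A) →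
      φ ⟨k, hlt hk⟩ = c1 ∨ φ ⟨k, hlt hk⟩ = c2 := by
    intro k hk hcr
    by_contra hcon
    push_neg at hcon
    have hadj := hAdj k hk
    by_cases hk0 : g k ∈ A
    · have hk1 : g (k + 1) ∉ A := fun h => hcr ⟨fun _ => h, fun _ => hk0⟩
      exact h3 _ hcon.1 hcon.2 _ _ hk0 hk1 hadj
    · have hk1 : g (k + 1) ∈ A := by
        by_contra h
        exact hcr ⟨fun h' => absurd h' hk0, fun h' => absurd h' h⟩
      exact h3 _ hcon.1 hcon.2 _ _ hk1 hk0 hadj.symm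
  -- existence of a down-crossing i and an up-crossing j
  obtain ⟨ka, hka, hkan⟩ : ∃ k, g k = u ∧ k ≤ n := by
    simpa [hgdef, hlen] using
      (SimpleGraph.Walk.mem_support_iff_exists_getVert.mp (hp.mem_support u))
  obtain ⟨kb, hkb, hkbn⟩ : ∃ k, g k = v ∧ k ≤ n := by
    simpa [hgdef, hlen] using
      (SimpleGraph.Walk.mem_support_iff_exists_getVert.mp (hp.mem_support v))
  have hex : ∃ i j, i < n ∧ j < n ∧ i ≠ j ∧ g i ∈ A ∧ g (i + 1) ∉ A ∧
      g j ∉ A ∧ g (j + 1) ∈ A := by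
    by_cases h0 : g 0 ∈ A
    · obtain ⟨i, -, hib, hPi, hPi1⟩ :=
        aux_flip (P := fun k => g k ∈ A) (Nat.zero_le kb) h0 (by show g kb ∉ A; rw [hkb]; exact hv)
      obtain ⟨j, hjb, hjn, hPj, hPj1⟩ :=
        aux_flip (P := fun k => g k ∉ A) hkbn (by show g kb ∉ A; rw [hkb]; exact hv)
          (by show ¬g n ∉ A; rw [hgn0]; exact not_not_intro h0)
      exact ⟨i, j, by omega, hjn, by omega, hPi, hPi1, hPj, not_not.mp hPj1⟩
    · obtain ⟨j, -, hja, hPj, hPj1⟩ :=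
        aux_flip (P := fun k => g k ∉ A) (Nat.zero_le ka) h0 (by show ¬g ka ∉ A; rw [hka]; exact not_not_intro hu)
      obtain ⟨i, hia, hin, hPi, hPi1⟩ :=
        aux_flip (P := fun k => g k ∈ A) hkan (by show g ka ∈ A; rw [hka]; exact hu) (by show g n ∈ A → False; rw [hgn0]; exact h0)
      exact ⟨i, j, hin, by omega, by omega, hPi, hPi1, hPj, not_not.mp hPj1⟩
  obtain ⟨i, j, hi, hj, hij, hPi, hPi1, hPj, hPj1⟩ := hex
  -- i and j are the only crossings
  have hcri : ¬(g i ∈ A ↔ g (i + 1) ∈ A) := fun hf => hPi1 (hf.mp hPi)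
  have hcrj : ¬(g j ∈ A ↔ g (j + 1) ∈ A) := fun hf => hPj (hf.mpr hPj1)
  have hiff : ∀ k, k < n → k ≠ i → k ≠ j → (g k ∈ A ↔ g (k + 1) ∈ A) := by
    intro k hk hki hkj
    by_contra hcr
    have hck := hcol k hk hcr
    have hci := hcol i hi hcri
    have hcj := hcol j hj hcrj
    have hne1 : φ ⟨k, hlt hk⟩ ≠ φ ⟨i, hlt hi⟩ := fun h =>
      hki (congrArg Fin.val (φ.injective h))
    have hne2 : φ ⟨k, hlt hk⟩ ≠ φ ⟨j, hlt hj⟩ := fun h =>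
      hkj (congrArg Fin.val (φ.injective h))
    have hne3 : φ ⟨i, hlt hi⟩ ≠ φ ⟨j, hlt hj⟩ := fun h =>
      hij (congrArg Fin.val (φ.injective h))
    rcases hck with hck | hck <;> rcases hci with hci | hci <;> rcases hcj with hcj | hcj <;>
      first
        | exact hne1 (hck.trans hci.symm)
        | exact hne2 (hck.trans hcj.symm)
        | exact hne3 (hci.trans hcj.symm)
  have hconst : ∀ a b, a ≤ b → b ≤ n → (∀ k, a ≤ k → k < b → k ≠ i ∧ k ≠ j) →
      (g a ∈ A ↔ g b ∈ A) := fun a b hab hbn h =>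
    aux_const hab fun k hk hkb =>
      hiff k (lt_of_lt_of_le hkb hbn) (h k hk hkb).1 (h k hk hkb).2
  -- endgame: the two crossing edges share their A-endpoint
  have endA : g i = g (j + 1) → ∀ y, y ∈ A → y ≠ g i → False := by
    intro hsh y hyA hy
    obtain ⟨k, hky, hkn⟩ : ∃ k, g k = y ∧ k ≤ n := by
      simpa [hgdef, hlen] using
        (SimpleGraph.Walk.mem_support_iff_exists_getVert.mp (hp.mem_support y))
    have hkA : g k ∈ A := by rw [hky]; exact hyA
    rcases Nat.lt_or_ge i j with hlt' | hge
    · by_cases hi0 : i = 0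
      · subst hi0
        have hjn : j + 1 = n :=
          hinj (j + 1) n (by omega) (by omega) (by omega) le_rfl (hsh.symm.trans hgn0.symm)
        have hk0 : k ≠ 0 := fun h => hy (h ▸ hky).symm
        have hkn' : k ≠ n := fun h => hy (((h ▸ hky).symm).trans hgn0)
        have hkj : k ≤ j := by omega
        have hcc : g (0 + 1) ∈ A ↔ g k ∈ A :=
          hconst (0 + 1) k (by omega) (by omega) (fun l hl hlk => ⟨by omega, by omega⟩)
        exact hPi1 (hcc.mpr hkA)
      · exact absurd (hinj i (j + 1) (by omega) (by omega) (by omega) (by omega) hsh) (by omega)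
    · have hji : j < i := by omega
      by_cases hji1 : j + 1 = i
      · rcases Nat.lt_or_ge j k with hk1 | hk2
        · rcases Nat.lt_or_ge i k with hk3 | hk4
          · have hcc : g (i + 1) ∈ A ↔ g k ∈ A :=
              hconst (i + 1) k (by omega) hkn (fun l hl hlk => ⟨by omega, by omega⟩)
            exact hPi1 (hcc.mpr hkA)
          · have : k = i := by omega
            exact hy (by rw [← hky, this])
        · have hcc : g k ∈ A ↔ g j ∈ A :=
            hconst k j hk2 (by omega) (fun l hl hlk => ⟨by omega, by omega⟩)
          exact hPj (hcc.mp hkA)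
      · exact absurd (hinj (j + 1) i (by omega) (by omega) (by omega) (by omega) hsh.symm)
          (by omega)
  -- endgame: the two crossing edges share their B-endpoint
  have endB : g (i + 1) = g j → ∀ y, y ∉ A → y ≠ g j → False := by
    intro hsh y hyB hy
    obtain ⟨k, hky, hkn⟩ : ∃ k, g k = y ∧ k ≤ n := by
      simpa [hgdef, hlen] using
        (SimpleGraph.Walk.mem_support_iff_exists_getVert.mp (hp.mem_support y))
    have hkB : g k ∉ A := by rw [hky]; exact hyB
    rcases Nat.lt_or_ge i j with hlt' | hge
    · by_cases hij1 : i + 1 = j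
      · rcases Nat.lt_or_ge i k with hk1 | hk2
        · rcases Nat.lt_or_ge j k with hk3 | hk4
          · have hcc : g (j + 1) ∈ A ↔ g k ∈ A :=
              hconst (j + 1) k (by omega) hkn (fun l hl hlk => ⟨by omega, by omega⟩)
            exact hkB (hcc.mp hPj1)
          · have : k = j := by omega
            exact hy (by rw [← hky, this])
        · have hcc : g k ∈ A ↔ g i ∈ A :=
            hconst k i hk2 (by omega) (fun l hl hlk => ⟨by omega, by omega⟩)
          exact hkB (hcc.mpr hPi)
      · exact absurd (hinj (i + 1) j (by omega) (by omega) (by omega) (by omega) hsh) (by omega)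
    · have hji : j < i := by omega
      by_cases hj0 : j = 0
      · subst hj0
        have hin : i + 1 = n :=
          hinj (i + 1) n (by omega) (by omega) (by omega) le_rfl (hsh.trans hgn0.symm)
        have hk0 : k ≠ 0 := fun h => hy (h ▸ hky).symm
        have hkn' : k ≠ n := fun h => hy (((h ▸ hky).symm).trans hgn0)
        have hki : k ≤ i := by omega
        have hcc : g (0 + 1) ∈ A ↔ g k ∈ A :=
          hconst (0 + 1) k (by omega) (by omega) (fun l hl hlk => ⟨by omega, by omega⟩)
        exact hkB (hcc.mp hPj1)
      · exact absurd (hinj j (i + 1) (by omega) (by omega) (by omega) (by omega) hsh.symm)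
          (by omega)
  -- final case analysis on the colors of the two crossing edges
  have hadji := hAdj i hi
  have hadjj := (hAdj j hj).symm
  have hciφ := hcol i hi hcri
  have hcjφ := hcol j hj hcrj
  have hneφ : φ ⟨i, hlt hi⟩ ≠ φ ⟨j, hlt hj⟩ := fun h =>
    hij (congrArg Fin.val (φ.injective h))
  rcases hciφ with hci | hci <;> rcases hcjφ with hcj | hcj
  · exact hneφ (hci.trans hcj.symm)
  · have hei := (h1 _ _ hPi hPi1).mp (hci ▸ hadji)
    have hej := (h2 _ _ hPj1 hPj).mp (hcj ▸ hadjj)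
    rcases hei with ⟨e1, e2⟩ | ⟨e1, e2⟩ <;> rcases hej with ⟨f1, f2⟩ | ⟨f1, f2⟩
    · exact endA (e1.trans f1.symm) u' hu' (fun h => huu ((h.trans e1).symm))
    · exact endB (e2.trans f2.symm) v' hv' (fun h => hvv ((h.trans f2).symm))
    · exact endB (e2.trans f2.symm) v hv (fun h => hvv (h.trans f2))
    · exact endA (e1.trans f1.symm) u hu (fun h => huu (h.trans e1))
  · have hei := (h2 _ _ hPi hPi1).mp (hci ▸ hadji)
    have hej := (h1 _ _ hPj1 hPj).mp (hcj ▸ hadjj)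
    rcases hei with ⟨e1, e2⟩ | ⟨e1, e2⟩ <;> rcases hej with ⟨f1, f2⟩ | ⟨f1, f2⟩
    · exact endA (e1.trans f1.symm) u' hu' (fun h => huu ((h.trans e1).symm))
    · exact endB (e2.trans f2.symm) v hv (fun h => hvv (h.trans f2))
    · exact endB (e2.trans f2.symm) v' hv' (fun h => hvv ((h.trans f2).symm))
    · exact endA (e1.trans f1.symm) u hu (fun h => huu (h.trans e1))
  · exact hneφ (hci.trans hcj.symm)
end
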